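/- The ASM selection-sort program terminates in exactly (n−1) + n(n−1)/2 steps from any legal initial state with n ≥ 1: n(n−1)/2 inner-loop steps (incrementing j) and n−1 outer-loop steps (incrementing i). -/
import Mathlib


/-- A state of the selection-sort ASM: nullary symbols `i`, `j`, `n` and a
unary function `F` over the integers. -/
structure SortState where
  i : ℤ
  j : ℤ
  n : ℤ
  F : ℤ → ℤ

/-- One transition step of the ASM
`if j = n then (if i+1 ≠ n then do {i := i+1; j := i+2})
 else do {if F(i) > F(j) then do {F(i) := F(j); F(j) := F(i)}; j := j+1}`,
with all enabled assignments applied simultaneously (right-hand sides evaluated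
in the current state).  On terminal states (no enabled assignment) it is the identity. -/
noncomputable def sortStep (X : SortState) : SortState :=
  if X.j = X.n then
    (if X.i + 1 ≠ X.n then { X with i := X.i + 1, j := X.i + 2 } else X)
  else
    { X with
      j := X.j + 1,
      F := if X.F X.i > X.F X.j then
          Function.update (Function.update X.F X.i (X.F X.j)) X.j (X.F X.i)
        else X.F }

/-- A state is terminal when no assignment is enabled: `j = n` and `i + 1 = n`. -/
def sortTerminal (X : SortState) : Prop := X.j = X.n ∧ X.i + 1 = X.n

/-- Legal initial states: `n ≥ 1`, `i = 0`, `j = 1` (and arbitrary `F`). -/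
def sortInitial (X : SortState) : Prop := 1 ≤ X.n ∧ X.i = 0 ∧ X.j = 1

/-- Invariant preserved by the dynamics. -/
def SortInv (X : SortState) : Prop := X.i + 1 ≤ X.j ∧ X.j ≤ X.n ∧ X.i + 1 ≤ X.n

/-- The measure: number of remaining steps. -/
def sortMu (X : SortState) : ℤ := (X.n - X.j) + (X.n - X.i - 1) * (X.n - X.i) / 2

lemma half_mul (a : ℤ) : 2 * (a * (a + 1) / 2) = a * (a + 1) := by
  obtain ⟨c, hc⟩ := Int.even_mul_succ_self a
  omega

lemma tri_eq (a : ℤ) : 2 * ((a - 1) * a / 2) = (a - 1) * a := by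
  have := half_mul (a - 1)
  have h : (a - 1) * (a - 1 + 1) = (a - 1) * a := by ring
  omega

lemma sortStep_i (X : SortState) (hInv : SortInv X) (hnt : ¬ sortTerminal X) :
    SortInv (sortStep X) ∧ sortMu (sortStep X) = sortMu X - 1 := by
  obtain ⟨h1, h2, h3⟩ := hInv
  unfold sortStep
  by_cases hj : X.j = X.n
  · have hi : X.i + 1 ≠ X.n := fun h => hnt ⟨hj, h⟩
    rw [if_pos hj, if_pos hi]
    constructor
    · exact ⟨by dsimp only; omega, by dsimp only; omega, by dsimp only; omega⟩
    · simp only [sortMu]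
      have hA := tri_eq (X.n - X.i)
      have hB := tri_eq (X.n - (X.i + 1))
      have hab : (X.n - X.i - 1) * (X.n - X.i) - (X.n - (X.i + 1) - 1) * (X.n - (X.i + 1))
          = 2 * (X.n - X.i - 1) := by ring
      set A := (X.n - X.i - 1) * (X.n - X.i) with hAdef
      set B := (X.n - (X.i + 1) - 1) * (X.n - (X.i + 1)) with hBdef
      omega
  · simp only [if_neg hj]
    refine ⟨⟨by dsimp only; omega, by dsimp only; omega, by dsimp only; exact h3⟩, ?_⟩
    simp only [sortMu]
    omega

lemma sort_main : ∀ m : ℕ, ∀ X : SortState, SortInv X → sortMu X = (m : ℤ) →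
    sortTerminal (sortStep^[m] X) ∧ ∀ k < m, ¬ sortTerminal (sortStep^[k] X) := by
  intro m
  induction m with
  | zero =>
    intro X hInv hmu
    obtain ⟨h1, h2, h3⟩ := hInv
    refine ⟨?_, by omega⟩
    simp only [Function.iterate_zero, id]
    simp only [sortMu] at hmu
    have hT := tri_eq (X.n - X.i)
    have hnn : 0 ≤ (X.n - X.i - 1) * (X.n - X.i) := mul_nonneg (by omega) (by omega)
    set A := (X.n - X.i - 1) * (X.n - X.i) with hAdef
    have hA0 : A = 0 := by omega
    have : X.n - X.i - 1 = 0 ∨ X.n - X.i = 0 := by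
      rcases mul_eq_zero.mp hA0 with h | h
      · exact Or.inl h
      · exact Or.inr h
    constructor <;> omega
  | succ m ih =>
    intro X hInv hmu
    have hnt : ¬ sortTerminal X := by
      intro ⟨hj, hi⟩
      simp only [sortMu, hj, hi] at hmu
      have h0 : X.n - X.i - 1 = 0 := by omega
      rw [h0, zero_mul] at hmu
      simp at hmu
      omega
    obtain ⟨hInv', hmu'⟩ := sortStep_i X hInv hnt
    have hmu'' : sortMu (sortStep X) = (m : ℤ) := by omega
    obtain ⟨hterm, hbefore⟩ := ih (sortStep X) hInv' hmu''
    constructor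
    · rw [Function.iterate_succ_apply]
      exact hterm
    · intro k hk
      cases k with
      | zero => simpa using hnt
      | succ k =>
        rw [Function.iterate_succ_apply]
        exact hbefore k (by omega)

/-- from any legal initial state with `n ≥ 1`, the sorting ASM terminates
in exactly `(n−1) + n(n−1)/2` steps: terminal after that many steps and not before. -/
theorem sort_step_count (X₀ : SortState) (h₀ : sortInitial X₀) :
    sortTerminal (sortStep^[((X₀.n - 1) + X₀.n * (X₀.n - 1) / 2).toNat] X₀) ∧
    ∀ k : ℕ, (k : ℤ) < (X₀.n - 1) + X₀.n * (X₀.n - 1) / 2 →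
      ¬ sortTerminal (sortStep^[k] X₀) := by
  obtain ⟨hn, hi, hj⟩ := h₀
  have hInv : SortInv X₀ := ⟨by omega, by omega, by omega⟩
  have hmueq : sortMu X₀ = (X₀.n - 1) + X₀.n * (X₀.n - 1) / 2 := by
    simp only [sortMu, hi, hj]
    have h1 : X₀.n - 0 - 1 = X₀.n - 1 := by ring
    have h2 : X₀.n - 0 = X₀.n := by ring
    rw [h1, h2, mul_comm]
  have hmunn : 0 ≤ sortMu X₀ := by
    simp only [sortMu, hi, hj]
    have hT := tri_eq (X₀.n - 0)
    have hnn : 0 ≤ (X₀.n - 0 - 1) * (X₀.n - 0) := mul_nonneg (by omega) (by omega)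
    set A := (X₀.n - 0 - 1) * (X₀.n - 0) with hAdef
    omega
  set M := (X₀.n - 1) + X₀.n * (X₀.n - 1) / 2 with hM
  have hcast : sortMu X₀ = ((M.toNat : ℤ)) := by omega
  obtain ⟨hterm, hbefore⟩ := sort_main M.toNat X₀ hInv hcast
  refine ⟨hterm, fun k hk => hbefore k (by omega)⟩
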